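/- arXiv:2210.06005 — 2 statements merged into one kernel-verified Lean document; each statement's English description precedes it below -/
import Mathlib

section
/- Let p and q be probability density functions on ℝ^d with respect to Lebesgue measure, with induced probability measures P and Q. For any measurable function D : ℝ^d → [0,1], the value V(D) = ∫ p(x)·log D(x) dx + ∫ q(x)·log(1 − D(x)) dx (taking values in the extended reals) is maximized by the discriminator D*(x) = p(x)/(p(x) + q(x)); that is, V(D) ≤ V(D*) for every measurable D : ℝ^d → [0,1]. -/
open MeasureTheory
open scoped ENNReal

/-- The negative logarithm `t ↦ -log t` as an `ℝ≥0∞`-valued function on `[0,1]`,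
with the convention `-log 0 = ∞` (i.e. `log 0 = -∞`). -/
noncomputable def negLog (t : ℝ) : ℝ≥0∞ :=
  if t = 0 then ⊤ else ENNReal.ofReal (-Real.log t)

/-- The GAN value `V(D) = ∫ p x * log (D x) dx + ∫ q x * log (1 - D x) dx`,
valued in the extended reals.  Since `D x ∈ [0,1]`, both integrands are nonpositive
and the value is the negative of a `ℝ≥0∞`-valued lower integral; the conventions
`log 0 = -∞` and `0 * (-∞) = 0` are built in (as `0 * ∞ = 0` in `ℝ≥0∞`). -/
noncomputable def ganValue {d : ℕ} (p q : (Fin d → ℝ) → ℝ) (D : (Fin d → ℝ) → ℝ) : EReal :=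
  -((((∫⁻ x, ENNReal.ofReal (p x) * negLog (D x))
      + ∫⁻ x, ENNReal.ofReal (q x) * negLog (1 - D x) : ℝ≥0∞)) : EReal)

/-- The optimal discriminator `D* x = p x / (p x + q x)`, set to `1/2` where
`p x + q x = 0`. -/
noncomputable def optimalD {d : ℕ} (p q : (Fin d → ℝ) → ℝ) (x : Fin d → ℝ) : ℝ :=
  if p x + q x = 0 then 1 / 2 else p x / (p x + q x)

/-!
Pointwise, with `a = p x` and `b = q x`, Gibbs' inequality
`a log t + b log (1 - t) ≤ a log (a / (a + b)) + b log (b / (a + b))` follows by adding the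
instances `y = t (a + b)` and `y = (1 - t) (a + b)` of `a log y ≤ a log a + (y - a)`, i.e. of
`log z ≤ z - 1`. Integrating needs no integrability in lower Lebesgue integrals: on the side of
`D*` the integral of a sum dominates the sum of the integrals, and on the side of `D` the sum
splits exactly because `x ↦ p x · (-log (D x))` is measurable.
-/

open Real Set

lemma measurable_negLog : Measurable negLog :=
  Measurable.ite (measurableSet_singleton 0) measurable_const
    measurable_log.neg.ennreal_ofReal

lemma negLog_of_pos {t : ℝ} (ht : 0 < t) : negLog t = ENNReal.ofReal (-log t) := by
  rw [negLog, if_neg ht.ne']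

@[simp] lemma negLog_zero : negLog 0 = ⊤ := by simp [negLog]

@[simp] lemma negLog_one : negLog 1 = 0 := by simp [negLog]

lemma mul_log_le_mul_log_add_sub {a x : ℝ} (ha : 0 < a) (hx : 0 < x) :
    a * log x ≤ a * log a + (x - a) := by
  have h := log_le_sub_one_of_pos (div_pos hx ha)
  rw [log_div hx.ne' ha.ne', sub_le_iff_le_add] at h
  have := mul_le_mul_of_nonneg_left h ha.le
  rw [mul_add, mul_sub, mul_div_cancel₀ _ ha.ne'] at this
  linarith

lemma mul_log_add_mul_log_le {a b t : ℝ} (ha : 0 < a) (hb : 0 < b) (ht0 : 0 < t) (ht1 : t < 1) :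
    a * log t + b * log (1 - t) ≤ a * log (a / (a + b)) + b * log (b / (a + b)) := by
  have hs : 0 < a + b := by linarith
  have hta := mul_log_le_mul_log_add_sub ha (mul_pos ht0 hs)
  have htb := mul_log_le_mul_log_add_sub hb (mul_pos (sub_pos.2 ht1) hs)
  rw [log_mul ht0.ne' hs.ne'] at hta
  rw [log_mul (sub_pos.2 ht1).ne' hs.ne'] at htb
  rw [log_div ha.ne' hs.ne', log_div hb.ne' hs.ne']
  linarith

lemma ofReal_mul_negLog_add_le {a b t : ℝ} (ha : 0 ≤ a) (hb : 0 ≤ b) (ht : t ∈ Icc (0 : ℝ) 1) :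
    ENNReal.ofReal a * negLog (a / (a + b)) + ENNReal.ofReal b * negLog (b / (a + b))
      ≤ ENNReal.ofReal a * negLog t + ENNReal.ofReal b * negLog (1 - t) := by
  rcases ha.eq_or_lt with rfl | ha
  · rcases hb.eq_or_lt with rfl | hb
    · simp
    · simp [div_self hb.ne']
  rcases hb.eq_or_lt with rfl | hb
  · simp [div_self ha.ne']
  rcases ht.1.eq_or_lt with rfl | ht0
  · simp [ENNReal.mul_top, ha]
  rcases ht.2.eq_or_lt with rfl | ht1
  · simp [ENNReal.mul_top, hb]
  have hs : 0 < a + b := add_pos ha hb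
  have hlog_nonneg {u : ℝ} (hu0 : 0 ≤ u) (hu1 : u ≤ 1) : 0 ≤ -log u :=
    neg_nonneg.2 (log_nonpos hu0 hu1)
  rw [negLog_of_pos (div_pos ha hs), negLog_of_pos (div_pos hb hs), negLog_of_pos ht0,
    negLog_of_pos (sub_pos.2 ht1), ← ENNReal.ofReal_mul ha.le, ← ENNReal.ofReal_mul hb.le,
    ← ENNReal.ofReal_mul ha.le, ← ENNReal.ofReal_mul hb.le, ← ENNReal.ofReal_add
      (mul_nonneg ha.le (hlog_nonneg (by positivity) (div_le_one_of_le₀ (by linarith) hs.le)))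
      (mul_nonneg hb.le (hlog_nonneg (by positivity) (div_le_one_of_le₀ (by linarith) hs.le)))]
  refine (ENNReal.ofReal_le_ofReal ?_).trans ENNReal.ofReal_add_le
  linarith [mul_log_add_mul_log_le ha hb ht0 ht1]

lemma ofReal_mul_negLog_optimalD_add_le {d : ℕ} {p q : (Fin d → ℝ) → ℝ} {x : Fin d → ℝ} {t : ℝ}
    (hpx : 0 ≤ p x) (hqx : 0 ≤ q x) (ht : t ∈ Icc (0 : ℝ) 1) :
    ENNReal.ofReal (p x) * negLog (optimalD p q x)
        + ENNReal.ofReal (q x) * negLog (1 - optimalD p q x)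
      ≤ ENNReal.ofReal (p x) * negLog t + ENNReal.ofReal (q x) * negLog (1 - t) := by
  by_cases hs : p x + q x = 0
  · simp [ENNReal.ofReal_of_nonpos, show p x ≤ 0 by linarith, show q x ≤ 0 by linarith]
  have hsub : 1 - p x / (p x + q x) = q x / (p x + q x) := by field_simp; ring
  rw [optimalD, if_neg hs, hsub]
  exact ofReal_mul_negLog_add_le hpx hqx ht

theorem ganValue_le_optimal_general {d : ℕ} (p q : (Fin d → ℝ) → ℝ)
    (hp : Measurable p) (hp0 : ∀ x, 0 ≤ p x)
    (hq0 : ∀ x, 0 ≤ q x) :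
    ∀ D : (Fin d → ℝ) → ℝ, Measurable D → (∀ x, D x ∈ Set.Icc (0 : ℝ) 1) →
      ganValue p q D ≤ ganValue p q (optimalD p q) := by
  intro D hD hD01
  rw [ganValue, ganValue, EReal.neg_le_neg_iff, EReal.coe_ennreal_le_coe_ennreal_iff]
  calc _ ≤ ∫⁻ x, ENNReal.ofReal (p x) * negLog (optimalD p q x)
          + ENNReal.ofReal (q x) * negLog (1 - optimalD p q x) := le_lintegral_add _ _
    _ ≤ ∫⁻ x, ENNReal.ofReal (p x) * negLog (D x) + ENNReal.ofReal (q x) * negLog (1 - D x) :=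
        lintegral_mono fun x ↦ ofReal_mul_negLog_optimalD_add_le (hp0 x) (hq0 x) (hD01 x)
    _ = _ := lintegral_add_left (hp.ennreal_ofReal.mul (measurable_negLog.comp hD)) _

theorem ganValue_le_optimal {d : ℕ} (p q : (Fin d → ℝ) → ℝ)
    (hp : Measurable p) (hp0 : ∀ x, 0 ≤ p x) (hp1 : ∫ x, p x = 1)
    (hq : Measurable q) (hq0 : ∀ x, 0 ≤ q x) (hq1 : ∫ x, q x = 1) :
    ∀ D : (Fin d → ℝ) → ℝ, Measurable D → (∀ x, D x ∈ Set.Icc (0 : ℝ) 1) →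
      ganValue p q D ≤ ganValue p q (optimalD p q) :=
  ganValue_le_optimal_general p q hp hp0 hq0
end

section
/- (Theorem 1, minimum part) Let p and q be probability density functions on ℝ^d with respect to Lebesgue measure, with induced probability measures P and Q, and let C := ∫ p(x)·log( p(x)/(p(x)+q(x)) ) dx + ∫ q(x)·log( q(x)/(p(x)+q(x)) ) dx. Then C ≥ −log 4, with equality if and only if P = Q (equivalently, p = q Lebesgue-almost everywhere). -/
open MeasureTheory
open scoped ENNReal

open Classical in
/-- Kullback–Leibler divergence, valued in the extended reals:
`KL(P‖Q) = ∫ log (dP/dQ) dP` if `P ≪ Q` and the log-likelihood ratio is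
`P`-integrable, and `∞` otherwise. -/
noncomputable def klDiv {Ω : Type*} [MeasurableSpace Ω] (P Q : Measure Ω) : EReal :=
  if P ≪ Q ∧ Integrable (llr P Q) P then ((∫ x, llr P Q x ∂P : ℝ) : EReal) else ⊤

/-- Jensen–Shannon divergence:
`JSD(P,Q) = (1/2) KL(P‖M) + (1/2) KL(Q‖M)` with `M = (1/2)(P + Q)`. -/
noncomputable def jsDiv {Ω : Type*} [MeasurableSpace Ω] (P Q : Measure Ω) : EReal :=
  (1 / 2 : EReal) * klDiv P ((2 : ℝ≥0∞)⁻¹ • (P + Q))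
    + (1 / 2 : EReal) * klDiv Q ((2 : ℝ≥0∞)⁻¹ • (P + Q))

lemma gan_F_eq_zero {a b : ℝ} (ha : 0 ≤ a) (hab : a = b) :
    a * Real.log (a/(a+b)) + b * Real.log (b/(a+b)) + (a+b) * Real.log 2 = 0 := by
  subst hab
  rcases eq_or_lt_of_le ha with h0 | h0
  · simp [← h0]
  · have h2a : (0:ℝ) < a + a := by linarith
    rw [Real.log_div (ne_of_gt h0) (ne_of_gt h2a)]
    have : Real.log (a + a) = Real.log 2 + Real.log a := by
      rw [← Real.log_mul (by norm_num) (ne_of_gt h0)]; ring_nf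
    rw [this]; ring

lemma gan_F_pos {a b : ℝ} (ha : 0 ≤ a) (hb : 0 ≤ b) (hab : a ≠ b) :
    0 < a * Real.log (a/(a+b)) + b * Real.log (b/(a+b)) + (a+b) * Real.log 2 := by
  have hlog2 : (0:ℝ) < Real.log 2 := Real.log_pos (by norm_num)
  rcases eq_or_lt_of_le ha with h0a | h0a
  · have hbpos : 0 < b := lt_of_le_of_ne hb (by rw [← h0a] at hab; exact hab)
    rw [← h0a]
    simp only [zero_mul, zero_add]
    rw [div_self (ne_of_gt hbpos)]
    simp only [Real.log_one, mul_zero, zero_add]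
    positivity
  rcases eq_or_lt_of_le hb with h0b | h0b
  · have hapos : 0 < a := h0a
    rw [← h0b]
    simp only [mul_zero, add_zero, zero_mul]
    rw [div_self (ne_of_gt hapos)]
    simp only [Real.log_one, mul_zero, add_zero, zero_add]
    positivity
  have hs : (0:ℝ) < a + b := by linarith
  have hconv := Real.strictConvexOn_mul_log.2 (Set.mem_Ici.2 ha) (Set.mem_Ici.2 hb) hab
    (by norm_num : (0:ℝ) < 1/2) (by norm_num : (0:ℝ) < 1/2) (by norm_num)
  have hmid : (1/2 : ℝ) • a + (1/2 : ℝ) • b = (a+b)/2 := by simp [smul_eq_mul]; ring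
  rw [hmid] at hconv
  simp only [smul_eq_mul] at hconv
  rw [Real.log_div (ne_of_gt hs) (by norm_num : (2:ℝ) ≠ 0)] at hconv
  rw [Real.log_div (ne_of_gt h0a) (ne_of_gt hs), Real.log_div (ne_of_gt h0b) (ne_of_gt hs)]
  nlinarith [hconv]

lemma gan_F_nonneg {a b : ℝ} (ha : 0 ≤ a) (hb : 0 ≤ b) :
    0 ≤ a * Real.log (a/(a+b)) + b * Real.log (b/(a+b)) + (a+b) * Real.log 2 := by
  rcases eq_or_ne a b with h | h
  · exact le_of_eq (gan_F_eq_zero ha h).symm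
  · exact le_of_lt (gan_F_pos ha hb h)

lemma gan_abs_bound {a b : ℝ} (ha : 0 ≤ a) (hb : 0 ≤ b) :
    |a * Real.log (a/(a+b))| ≤ a + b := by
  rcases eq_or_lt_of_le ha with h0 | h0
  · rw [← h0]; simpa using hb
  · have hs : (0:ℝ) < a + b := by linarith
    have hdiv : a / (a+b) ≤ 1 := by
      rw [div_le_one hs]; linarith
    have hlognp : Real.log (a/(a+b)) ≤ 0 :=
      Real.log_nonpos (by positivity) hdiv
    have habs : |a * Real.log (a/(a+b))| = a * (-Real.log (a/(a+b))) := by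
      rw [abs_mul, abs_of_nonneg ha, abs_of_nonpos hlognp]
    rw [habs]
    have hinv : -Real.log (a/(a+b)) = Real.log ((a+b)/a) := by
      rw [← Real.log_inv]; congr 1; rw [inv_div]
    rw [hinv]
    have hle : Real.log ((a+b)/a) ≤ (a+b)/a - 1 :=
      Real.log_le_sub_one_of_pos (by positivity)
    calc a * Real.log ((a+b)/a) ≤ a * ((a+b)/a - 1) := by
          exact mul_le_mul_of_nonneg_left hle ha
      _ = (a+b) - a := by field_simp
      _ ≤ a + b := by linarith

theorem gan_criterion_ge_neg_log_four {d : ℕ} (p q : (Fin d → ℝ) → ℝ)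
    (hp : Measurable p) (hp0 : ∀ x, 0 ≤ p x) (hp1 : ∫ x, p x = 1)
    (hq : Measurable q) (hq0 : ∀ x, 0 ≤ q x) (hq1 : ∫ x, q x = 1) :
    -Real.log 4 ≤ ((∫ x, p x * Real.log (p x / (p x + q x)))
        + ∫ x, q x * Real.log (q x / (p x + q x))) ∧
    (((∫ x, p x * Real.log (p x / (p x + q x)))
        + ∫ x, q x * Real.log (q x / (p x + q x))) = -Real.log 4
      ↔ (volume.withDensity fun x => ENNReal.ofReal (p x))
          = (volume.withDensity fun x => ENNReal.ofReal (q x))) ∧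
    (((∫ x, p x * Real.log (p x / (p x + q x)))
        + ∫ x, q x * Real.log (q x / (p x + q x))) = -Real.log 4
      ↔ p =ᵐ[volume] q) := by
  have hip : Integrable p := by
    by_contra hc
    rw [integral_undef hc] at hp1; norm_num at hp1
  have hiq : Integrable q := by
    by_contra hc
    rw [integral_undef hc] at hq1; norm_num at hq1
  set g1 : (Fin d → ℝ) → ℝ := fun x => p x * Real.log (p x / (p x + q x)) with hg1def
  set g2 : (Fin d → ℝ) → ℝ := fun x => q x * Real.log (q x / (p x + q x)) with hg2def
  have hg1m : Measurable g1 := hp.mul ((hp.div (hp.add hq)).log)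
  have hg2m : Measurable g2 := hq.mul ((hq.div (hp.add hq)).log)
  have hig1 : Integrable g1 := by
    refine (hip.add hiq).mono hg1m.aestronglyMeasurable (ae_of_all _ fun x => ?_)
    simp only [hg1def, Real.norm_eq_abs, Pi.add_apply]
    rw [abs_of_nonneg (by have := hp0 x; have := hq0 x; linarith : 0 ≤ p x + q x)]
    exact gan_abs_bound (hp0 x) (hq0 x)
  have hig2 : Integrable g2 := by
    refine (hip.add hiq).mono hg2m.aestronglyMeasurable (ae_of_all _ fun x => ?_)
    simp only [hg2def, Real.norm_eq_abs, Pi.add_apply]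
    rw [abs_of_nonneg (by have := hp0 x; have := hq0 x; linarith : 0 ≤ p x + q x)]
    have := gan_abs_bound (hq0 x) (hp0 x)
    rw [add_comm (q x) (p x)] at this
    linarith [this]
  set h : (Fin d → ℝ) → ℝ := fun x => g1 x + g2 x + (p x + q x) * Real.log 2 with hhdef
  have hipq : Integrable (fun x => p x + q x) := hip.add hiq
  have hi3 : Integrable (fun x => (p x + q x) * Real.log 2) := hipq.mul_const _
  have hih : Integrable h := (hig1.add hig2).add hi3
  have hF : ∀ x, h x = p x * Real.log (p x/(p x + q x)) + q x * Real.log (q x/(p x + q x))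
      + (p x + q x) * Real.log 2 := fun x => rfl
  have hnn : ∀ x, 0 ≤ h x := fun x => by
    rw [hF x]; exact gan_F_nonneg (hp0 x) (hq0 x)
  have hint : ∫ x, h x = (∫ x, g1 x) + (∫ x, g2 x) + 2 * Real.log 2 := by
    simp only [hhdef]
    have hi12 : Integrable (fun x => g1 x + g2 x) := hig1.add hig2
    rw [integral_add hi12 hi3, integral_add hig1 hig2]
    congr 1
    rw [integral_mul_const, integral_add hip hiq, hp1, hq1]
    ring
  have hlog4 : Real.log 4 = 2 * Real.log 2 := by
    rw [show (4:ℝ) = 2^2 by norm_num, Real.log_pow]; push_cast; ring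
  have haeiff : ((∫ x, g1 x) + (∫ x, g2 x) = -Real.log 4) ↔ p =ᵐ[volume] q := by
    constructor
    · intro he
      have hz : ∫ x, h x = 0 := by rw [hint, he, hlog4]; ring
      have h0 : h =ᵐ[volume] 0 :=
        (integral_eq_zero_iff_of_nonneg hnn hih).mp hz
      filter_upwards [h0] with x hx
      by_contra hne
      have := gan_F_pos (hp0 x) (hq0 x) hne
      rw [← hF x] at this
      rw [hx] at this
      simp at this
    · intro he
      have h0 : h =ᵐ[volume] 0 := by
        filter_upwards [he] with x hx
        rw [hF x]
        exact gan_F_eq_zero (hp0 x) hx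
      have hz : ∫ x, h x = 0 := by
        rw [integral_congr_ae h0]; simp
      rw [hint] at hz
      rw [hlog4]; linarith
  have hwd : ((volume.withDensity fun x => ENNReal.ofReal (p x))
      = (volume.withDensity fun x => ENNReal.ofReal (q x))) ↔ p =ᵐ[volume] q := by
    rw [withDensity_eq_iff_of_sigmaFinite hp.ennreal_ofReal.aemeasurable
      hq.ennreal_ofReal.aemeasurable]
    constructor
    · intro hae
      filter_upwards [hae] with x hx
      exact (ENNReal.ofReal_eq_ofReal_iff (hp0 x) (hq0 x)).mp hx
    · intro hae
      filter_upwards [hae] with x hx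
      rw [hx]
  have hge : -Real.log 4 ≤ (∫ x, g1 x) + (∫ x, g2 x) := by
    have : (0:ℝ) ≤ ∫ x, h x := integral_nonneg hnn
    rw [hint] at this
    rw [hlog4]; linarith
  exact ⟨hge, haeiff.trans hwd.symm, haeiff⟩
end
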